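/- arXiv:0911.1500 — 2 statements merged into one kernel-verified Lean document; each statement's English description precedes it below -/
import Mathlib

section
/- (Invariance of the |·|₁ semi-norm under PGA with small coherence) If D is a dictionary with μ₁(D) < 1/3 and f ∈ A¹(D), then every PGA residual f_m lies in A¹(D) with |f_m|₁ ≤ |f|₁. -/
/-!
Approximate `f` by a finite combination `h = ∑_{x ∈ S} c_x x` of `A¹(D, M)` whose support contains
the greedy atom `g`, and let `a = ⟪f, g⟫`. By coherence, `⟪h, x⟫` is within `μ B` of `c_x` for
`x ∈ S`, where `B = max |c_x|`. Greediness makes `|a| ≥ (1 - μ) B` and hence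
`|c_g| ≥ (1 - 2μ) B ≥ μ B ≥ |c_g - a|` up to the approximation error, which is where `μ ≤ 1/3`
enters. So replacing `c_g` by `c_g - a` does not increase `∑ |c_x|` beyond that error: one PGA step
maps `A¹(D, M)` into itself, and by induction so do all of them.
-/

open RealInnerProductSpace Finset

/-- The set of finite linear combinations `Σ_{g∈S} c_g g` of distinct
dictionary elements with `Σ_{g∈S} |c_g|^p ≤ M^p`. -/
def repSet {H : Type*} [NormedAddCommGroup H] [InnerProductSpace ℝ H]
    (D : Set H) (p M : ℝ) : Set H :=
  {h | ∃ (S : Finset H) (c : H → ℝ), ↑S ⊆ D ∧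
    (∑ g ∈ S, |c g| ^ p) ≤ M ^ p ∧ h = ∑ g ∈ S, c g • g}

/-- The class `A^p(D, M)` is the closure of `repSet D p M`. -/
def Aclass {H : Type*} [NormedAddCommGroup H] [InnerProductSpace ℝ H]
    (D : Set H) (p M : ℝ) : Set H :=
  closure (repSet D p M)

/-- The semi-norm `|f|_p = inf {M ≥ 0 : f ∈ A^p(D, M)}`. -/
noncomputable def Anorm {H : Type*} [NormedAddCommGroup H]
    [InnerProductSpace ℝ H] (D : Set H) (p : ℝ) (f : H) : ℝ :=
  sInf {M | 0 ≤ M ∧ f ∈ Aclass D p M}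

section

variable {H : Type*} [NormedAddCommGroup H] [InnerProductSpace ℝ H] {D : Set H}

/-- `μ₁(D) ≤ μ` for the cumulative coherence `μ₁`. -/
def CoherenceLE (D : Set H) (μ : ℝ) : Prop :=
  ∀ g ∈ D, ∀ S : Finset H, ↑S ⊆ D → g ∉ S → ∑ h ∈ S, |⟪h, g⟫| ≤ μ

lemma mem_repSet_one_iff {M : ℝ} {h : H} :
    h ∈ repSet D 1 M ↔
      ∃ (S : Finset H) (c : H → ℝ), ↑S ⊆ D ∧ ∑ x ∈ S, |c x| ≤ M ∧ h = ∑ x ∈ S, c x • x := by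
  simp only [repSet, Real.rpow_one, Set.mem_ofPred_eq]

lemma exists_repr_mem_support_of_mem_repSet_one {M : ℝ} {g h : H} (hg : g ∈ D)
    (hh : h ∈ repSet D 1 M) :
    ∃ (S : Finset H) (c : H → ℝ), ↑S ⊆ D ∧ g ∈ S ∧ ∑ x ∈ S, |c x| ≤ M ∧
      h = ∑ x ∈ S, c x • x := by
  classical
  obtain ⟨S, c, hS, hsum, rfl⟩ := mem_repSet_one_iff.1 hh
  by_cases hgS : g ∈ S
  · exact ⟨S, c, hS, hgS, hsum, rfl⟩
  have hupdate : ∀ x ∈ S, Function.update c g 0 x = c x := fun x hx =>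
    Function.update_of_ne (ne_of_mem_of_not_mem hx hgS) _ _
  refine ⟨insert g S, Function.update c g 0, by simpa using Set.insert_subset hg hS,
    mem_insert_self g S, ?_, ?_⟩
  · rw [sum_insert hgS, Function.update_self, abs_zero, zero_add]
    exact (sum_congr rfl fun x hx => by rw [hupdate x hx]).trans_le hsum
  · rw [sum_insert hgS, Function.update_self, zero_smul, zero_add]
    exact sum_congr rfl fun x hx => by rw [hupdate x hx]

lemma norm_le_of_mem_repSet_one (hDnorm : ∀ g ∈ D, ‖g‖ = 1) {M : ℝ} {h : H}
    (hh : h ∈ repSet D 1 M) : ‖h‖ ≤ M := by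
  obtain ⟨S, c, hS, hsum, rfl⟩ := mem_repSet_one_iff.1 hh
  refine (norm_sum_le _ _).trans ((sum_congr rfl fun x hx => ?_).trans_le hsum)
  rw [norm_smul, hDnorm x (hS hx), mul_one, Real.norm_eq_abs]

lemma smul_mem_repSet_one {M t : ℝ} (ht : 0 ≤ t) {h : H} (hh : h ∈ repSet D 1 M) :
    t • h ∈ repSet D 1 (t * M) := by
  obtain ⟨S, c, hS, hsum, rfl⟩ := mem_repSet_one_iff.1 hh
  refine mem_repSet_one_iff.2 ⟨S, fun x => t * c x, hS, ?_, by simp [smul_sum, mul_smul]⟩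
  simpa [abs_mul, abs_of_nonneg ht, ← mul_sum] using mul_le_mul_of_nonneg_left hsum ht

/-- Shrinking `h` by the factor `M / (M + E)` moves it by at most `E`. -/
lemma exists_mem_repSet_one_dist_le (hDnorm : ∀ g ∈ D, ‖g‖ = 1) {M E : ℝ} (hM : 0 ≤ M)
    (hE : 0 < E) {h : H} (hh : h ∈ repSet D 1 (M + E)) :
    ∃ h' ∈ repSet D 1 M, dist h h' ≤ E := by
  have hME : 0 < M + E := by linarith
  set t := M / (M + E)
  have ht : 0 ≤ t := div_nonneg hM hME.le
  have ht1 : 0 ≤ 1 - t := by rw [sub_nonneg, div_le_one hME]; linarith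
  refine ⟨t • h, by simpa [t, hME.ne'] using smul_mem_repSet_one ht hh, ?_⟩
  calc dist h (t • h) = (1 - t) * ‖h‖ := by
        rw [dist_eq_norm, ← norm_smul_of_nonneg ht1, sub_smul, one_smul]
    _ ≤ (1 - t) * (M + E) := by gcongr; exact norm_le_of_mem_repSet_one hDnorm hh
    _ = E := by rw [sub_mul, div_mul_cancel₀ _ hME.ne']; ring

lemma mem_Aclass_one_of_forall_exists_dist_lt (hDnorm : ∀ g ∈ D, ‖g‖ = 1) {M : ℝ}
    (hM : 0 ≤ M) {y : H} (hy : ∀ δ > 0, ∃ h ∈ repSet D 1 (M + δ), dist y h < δ) :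
    y ∈ Aclass D 1 M := by
  refine Metric.mem_closure_iff.2 fun ε hε => ?_
  obtain ⟨h, hh, hyh⟩ := hy (ε / 2) (by positivity)
  obtain ⟨h', hh', hhh'⟩ := exists_mem_repSet_one_dist_le hDnorm hM (by positivity) hh
  exact ⟨h', hh', by linarith [dist_triangle y h h']⟩

lemma repSet_one_sub_smul_mem {M η a : ℝ} {S : Finset H} {c : H → ℝ} {g : H} (hS : ↑S ⊆ D)
    (hgS : g ∈ S) (hsum : ∑ x ∈ S, |c x| ≤ M) (hcg : |c g - a| ≤ |c g| + η) :
    ∑ x ∈ S, c x • x - a • g ∈ repSet D 1 (M + η) := by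
  classical
  set c' := Function.update c g (c g - a)
  have hc'g : c' g = c g - a := Function.update_self _ _ _
  have herase : ∀ x ∈ S.erase g, c' x = c x := fun x hx =>
    Function.update_of_ne (ne_of_mem_erase hx) _ _
  refine mem_repSet_one_iff.2 ⟨S, c', hS, ?_, ?_⟩
  · rw [← add_sum_erase S _ hgS] at hsum ⊢
    rw [hc'g, sum_congr rfl fun x hx => by rw [herase x hx]]
    linarith
  · have hrest : ∑ x ∈ S.erase g, c' x • x = ∑ x ∈ S.erase g, c x • x :=
      sum_congr rfl fun x hx => by rw [herase x hx]
    rw [← add_sum_erase S (fun x => c x • x) hgS, ← add_sum_erase S (fun x => c' x • x) hgS,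
      hrest, hc'g, sub_smul]
    abel

lemma abs_inner_sum_smul_sub_le (hDnorm : ∀ g ∈ D, ‖g‖ = 1) {μ : ℝ}
    (hμ : CoherenceLE D μ)
    {S : Finset H} {c : H → ℝ} {B : ℝ} (hS : ↑S ⊆ D) (hB : ∀ x ∈ S, |c x| ≤ B)
    {g : H} (hgS : g ∈ S) :
    |⟪∑ x ∈ S, c x • x, g⟫ - c g| ≤ μ * B := by
  classical
  have hgD : g ∈ D := hS hgS
  have hB0 : 0 ≤ B := (abs_nonneg _).trans (hB g hgS)
  have hgg : ⟪g, g⟫ = 1 := by rw [real_inner_self_eq_norm_sq, hDnorm g hgD, one_pow]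
  rw [sum_inner, ← add_sum_erase S _ hgS, real_inner_smul_left, hgg, mul_one,
    add_sub_cancel_left]
  calc |∑ x ∈ S.erase g, ⟪c x • x, g⟫| ≤ ∑ x ∈ S.erase g, B * |⟪x, g⟫| := by
        refine (abs_sum_le_sum_abs _ _).trans (sum_le_sum fun x hx => ?_)
        rw [real_inner_smul_left, abs_mul]
        exact mul_le_mul_of_nonneg_right (hB x (mem_of_mem_erase hx)) (abs_nonneg _)
    _ = B * ∑ x ∈ S.erase g, |⟪x, g⟫| := (mul_sum _ _ _).symm
    _ ≤ B * μ := mul_le_mul_of_nonneg_left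
        (hμ g hgD _ (fun x hx => hS (mem_of_mem_erase hx)) (notMem_erase g S)) hB0
    _ = μ * B := mul_comm _ _

lemma abs_coeff_sub_inner_le_of_greedy (hDnorm : ∀ g ∈ D, ‖g‖ = 1) {μ : ℝ} (hμ3 : 3 * μ ≤ 1)
    (hμ : CoherenceLE D μ)
    {S : Finset H} {c : H → ℝ} {f g : H} {δ : ℝ} (hS : ↑S ⊆ D) (hgS : g ∈ S)
    (hgreedy : ∀ g' ∈ D, |⟪f, g'⟫| ≤ |⟪f, g⟫|) (hf : ‖f - ∑ x ∈ S, c x • x‖ ≤ δ) :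
    |c g - ⟪f, g⟫| ≤ |c g| + 3 * δ := by
  set h := ∑ x ∈ S, c x • x
  obtain ⟨gm, hgmS, hgm⟩ := exists_max_image S (fun x => |c x|) ⟨g, hgS⟩
  set B := |c gm|
  have hclose : ∀ g' ∈ D, |⟪f, g'⟫ - ⟪h, g'⟫| ≤ δ := fun g' hg' => by
    rw [← inner_sub_left]
    calc |⟪f - h, g'⟫| ≤ ‖f - h‖ * ‖g'‖ := abs_real_inner_le_norm _ _
      _ ≤ δ := by rw [hDnorm g' hg', mul_one]; exact hf
  have hcoh_gm : |⟪h, gm⟫ - c gm| ≤ μ * B := abs_inner_sum_smul_sub_le hDnorm hμ hS hgm hgmS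
  have hcoh_g : |⟪h, g⟫ - c g| ≤ μ * B := abs_inner_sum_smul_sub_le hDnorm hμ hS hgm hgS
  have hcg_sub : |c g - ⟪f, g⟫| ≤ μ * B + δ := by
    have := abs_sub_le (c g) ⟪h, g⟫ ⟪f, g⟫
    rw [abs_sub_comm (c g) ⟪h, g⟫, abs_sub_comm ⟪h, g⟫ ⟪f, g⟫] at this
    linarith [hclose g (hS hgS)]
  have hB : B ≤ |⟪f, g⟫| + μ * B + δ := by
    have h1 := abs_sub_abs_le_abs_sub (c gm) ⟪f, gm⟫
    have h2 := abs_sub_le (c gm) ⟪h, gm⟫ ⟪f, gm⟫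
    rw [abs_sub_comm (c gm) ⟪h, gm⟫, abs_sub_comm ⟪h, gm⟫ ⟪f, gm⟫] at h2
    linarith [hclose gm (hS hgmS), hgreedy gm (hS hgmS)]
  have hcg_lower : μ * B ≤ |c g| + 2 * δ := by
    have hfg := abs_sub_abs_le_abs_sub ⟪f, g⟫ (c g)
    rw [abs_sub_comm] at hfg
    nlinarith [mul_nonneg (sub_nonneg.2 hμ3) (abs_nonneg (c gm))]
  linarith

lemma sub_inner_smul_mem_Aclass_one_of_greedy (hDnorm : ∀ g ∈ D, ‖g‖ = 1) {μ : ℝ}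
    (hμ3 : 3 * μ ≤ 1)
    (hμ : CoherenceLE D μ)
    {f g : H} (hg : g ∈ D) (hgreedy : ∀ g' ∈ D, |⟪f, g'⟫| ≤ |⟪f, g⟫|)
    {M : ℝ} (hM : 0 ≤ M) (hf : f ∈ Aclass D 1 M) :
    f - ⟪f, g⟫ • g ∈ Aclass D 1 M := by
  refine mem_Aclass_one_of_forall_exists_dist_lt hDnorm hM fun δ hδ => ?_
  obtain ⟨h, hh, hfh⟩ := Metric.mem_closure_iff.1 hf (δ / 3) (by positivity)
  obtain ⟨S, c, hS, hgS, hsum, rfl⟩ := exists_repr_mem_support_of_mem_repSet_one hg hh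
  have hcg := abs_coeff_sub_inner_le_of_greedy hDnorm hμ3 hμ hS hgS hgreedy
    (dist_eq_norm f _ ▸ hfh.le)
  refine ⟨_, repSet_one_sub_smul_mem hS hgS hsum (hcg.trans_eq (by ring)), ?_⟩
  rw [dist_sub_right]
  linarith

lemma Anorm_le_Anorm_of_forall_mem_Aclass {p : ℝ} {f f' : H}
    (hmono : ∀ M, 0 ≤ M → f ∈ Aclass D p M → f' ∈ Aclass D p M)
    (hf : ∃ M, 0 ≤ M ∧ f ∈ Aclass D p M) :
    Anorm D p f' ≤ Anorm D p f :=
  csInf_le_csInf ⟨0, fun _ hM => hM.1⟩ hf fun M hM => ⟨hM.1, hmono M hM.1 hM.2⟩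

end

theorem pga_A1_norm_invariance_general
    {H : Type*} [NormedAddCommGroup H] [InnerProductSpace ℝ H]
    (D : Set H) (hDnorm : ∀ g ∈ D, ‖g‖ = 1)
    (μ : ℝ) (hμlt : μ < 1 / 3)
    (hμ : ∀ g ∈ D, ∀ S : Finset H, ↑S ⊆ D → g ∉ S →
      ∑ h ∈ S, |⟪h, g⟫| ≤ μ)
    (f : H) (hf : ∃ M : ℝ, 0 ≤ M ∧ f ∈ Aclass D 1 M)
    (fs : ℕ → H) (gs : ℕ → H)
    (h0 : fs 0 = f)
    (hgD : ∀ m, gs (m + 1) ∈ D)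
    (hgreedy : ∀ m, ∀ g ∈ D, |⟪fs m, g⟫| ≤ |⟪fs m, gs (m + 1)⟫|)
    (hstep : ∀ m, fs (m + 1) = fs m - ⟪fs m, gs (m + 1)⟫ • gs (m + 1)) :
    ∀ m : ℕ, (∃ M : ℝ, 0 ≤ M ∧ fs m ∈ Aclass D 1 M) ∧
      Anorm D 1 (fs m) ≤ Anorm D 1 f := by
  have hμ3 : 3 * μ ≤ 1 := by linarith
  have hmono : ∀ m M, 0 ≤ M → f ∈ Aclass D 1 M → fs m ∈ Aclass D 1 M := by
    intro m M hM hfM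
    induction m with
    | zero => rwa [h0]
    | succ m ih =>
      rw [hstep m]
      exact sub_inner_smul_mem_Aclass_one_of_greedy hDnorm hμ3 hμ (hgD m) (hgreedy m) hM ih
  intro m
  obtain ⟨M, hM, hfM⟩ := hf
  exact ⟨⟨M, hM, hmono m M hM hfM⟩,
    Anorm_le_Anorm_of_forall_mem_Aclass (hmono m) ⟨M, hM, hfM⟩⟩

/-- Invariance of `|·|₁` under PGA with small coherence: if `μ₁(D) < 1/3` and
`f ∈ A¹(D)`, then every PGA residual `f_m` lies in `A¹(D)` with
`|f_m|₁ ≤ |f|₁`. -/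
theorem pga_A1_norm_invariance
    {H : Type*} [NormedAddCommGroup H] [InnerProductSpace ℝ H] [CompleteSpace H]
    [TopologicalSpace.SeparableSpace H]
    (D : Set H) (hDnorm : ∀ g ∈ D, ‖g‖ = 1)
    (hDdense : Dense (↑(Submodule.span ℝ D) : Set H))
    (μ : ℝ) (hμlt : μ < 1 / 3)
    (hμ : ∀ g ∈ D, ∀ S : Finset H, ↑S ⊆ D → g ∉ S →
      ∑ h ∈ S, |⟪h, g⟫| ≤ μ)
    (f : H) (hf : ∃ M : ℝ, 0 ≤ M ∧ f ∈ Aclass D 1 M)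
    (fs : ℕ → H) (gs : ℕ → H)
    (h0 : fs 0 = f)
    (hgD : ∀ m, gs (m + 1) ∈ D)
    (hgreedy : ∀ m, ∀ g ∈ D, |⟪fs m, g⟫| ≤ |⟪fs m, gs (m + 1)⟫|)
    (hstep : ∀ m, fs (m + 1) = fs m - ⟪fs m, gs (m + 1)⟫ • gs (m + 1)) :
    ∀ m : ℕ, (∃ M : ℝ, 0 ≤ M ∧ fs m ∈ Aclass D 1 M) ∧
      Anorm D 1 (fs m) ≤ Anorm D 1 f :=
  pga_A1_norm_invariance_general D hDnorm μ hμlt hμ f hf fs gs h0 hgD hgreedy hstep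
end

section
/- Let D be a dictionary with μ₁(D) < 1/3 and 1 ≤ p < 2. Then there exist constants C₁ = C₁(p) > 0 and C₂ = C₂(μ₁(D)) > 0 such that for every f ∈ A^p(D) and every m ≥ 1, ‖f − G_m^{PGA}(f,D)‖ ≤ C₁ C₂ |f|_p m^{-1/p + 1/2}. -/
open RealInnerProductSpace Finset

/-!
By coherence, the Gram matrix of a finite family of atoms is within `μ` of the identity, on `ℓ²`
and (Schur's test) on `ℓ^p`; in particular the correlations of `f ∈ A^p(D, M)` with any finite set
of atoms have `ℓ^p` norm at most `(1 + μ) M`. Group the PGA steps by the atom they select and let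
`σ g` be the total absolute coefficient put on `g`. Each step either moves the correlation with `g`
into `σ g` or perturbs it by a Gram entry, so `σ ≤ |⟪f, ·⟫| + G σ` with `G` the off-diagonal Gram
operator, of `ℓ^p` norm at most `μ`. Hence `‖σ‖_p ≤ (1 + μ) / (1 - μ) M`, and every residual stays
in `A^p(D, 2 M / (1 - μ))`. For such a residual `v` with largest correlation `t`, Hölder and
Bessel give `‖v‖² ≤ K t^((2 - p) / p) ‖v‖^(2 (p - 1) / p)`, and the greedy step removes `t²` from
`‖v‖²`. So `a_m = ‖f_m‖²` satisfies `a_{m+1} ≤ a_m - a_m^(1 + r) / K^(2 r)` with `r = p / (2 - p)`,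
which forces `a_m ≤ K² m^(-1 / r)`.
-/

open scoped Classical

section RealInequalities

lemma rpow_one_div_le_iff {x y p : ℝ} (hx : 0 ≤ x) (hy : 0 ≤ y) (hp : 0 < p) :
    x ^ (1 / p) ≤ y ↔ x ≤ y ^ p := by
  rw [one_div, Real.rpow_inv_le_iff_of_pos hx hy hp]

lemma rpow_sum_mul_le_of_sum_le {ι : Type*} (s : Finset ι) {w x : ι → ℝ} (hw : ∀ i, 0 ≤ w i)
    (hx : ∀ i, 0 ≤ x i) {p W : ℝ} (hp : 1 ≤ p) (hsw : ∑ i ∈ s, w i ≤ W) :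
    (∑ i ∈ s, w i * x i) ^ p ≤ W ^ (p - 1) * ∑ i ∈ s, w i * x i ^ p := by
  have hp0 : 0 < p := zero_lt_one.trans_le hp
  have hW : 0 ≤ ∑ i ∈ s, w i := sum_nonneg fun i _ => hw i
  have hX : 0 ≤ ∑ i ∈ s, w i * x i ^ p :=
    sum_nonneg fun i _ => mul_nonneg (hw i) (Real.rpow_nonneg (hx i) p)
  calc (∑ i ∈ s, w i * x i) ^ p
      ≤ ((∑ i ∈ s, w i) ^ (1 - p⁻¹) * (∑ i ∈ s, w i * x i ^ p) ^ p⁻¹) ^ p :=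
        Real.rpow_le_rpow (sum_nonneg fun i _ => mul_nonneg (hw i) (hx i))
          (Real.inner_le_weight_mul_Lp_of_nonneg s hp w x hw hx) hp0.le
    _ = (∑ i ∈ s, w i) ^ (p - 1) * ∑ i ∈ s, w i * x i ^ p := by
        rw [Real.mul_rpow (Real.rpow_nonneg hW _) (Real.rpow_nonneg hX _),
          ← Real.rpow_mul hW, Real.rpow_inv_rpow hX hp0.ne', sub_mul, one_mul,
          inv_mul_cancel₀ hp0.ne']
    _ ≤ W ^ (p - 1) * ∑ i ∈ s, w i * x i ^ p := by gcongr

/-- Schur's test for an `ℓ^p → ℓ^p` bound of a nonnegative kernel. -/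
lemma sum_rpow_sum_mul_le {ι κ : Type*} (s : Finset ι) (t : Finset κ) {K : ι → κ → ℝ}
    {x : κ → ℝ} (hK : ∀ i j, 0 ≤ K i j) (hx : ∀ j, 0 ≤ x j) {p a b : ℝ} (hp : 1 ≤ p)
    (ha : 0 ≤ a) (hrow : ∀ i ∈ s, ∑ j ∈ t, K i j ≤ a) (hcol : ∀ j ∈ t, ∑ i ∈ s, K i j ≤ b) :
    ∑ i ∈ s, (∑ j ∈ t, K i j * x j) ^ p ≤ a ^ (p - 1) * b * ∑ j ∈ t, x j ^ p := by
  calc ∑ i ∈ s, (∑ j ∈ t, K i j * x j) ^ p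
      ≤ ∑ i ∈ s, a ^ (p - 1) * ∑ j ∈ t, K i j * x j ^ p :=
        sum_le_sum fun i hi => rpow_sum_mul_le_of_sum_le t (hK i) hx hp (hrow i hi)
    _ = a ^ (p - 1) * ∑ j ∈ t, (∑ i ∈ s, K i j) * x j ^ p := by
        rw [← mul_sum, sum_comm]
        simp only [sum_mul]
    _ ≤ a ^ (p - 1) * ∑ j ∈ t, b * x j ^ p := by
        gcongr with j hj
        · exact Real.rpow_nonneg (hx j) p
        · exact hcol j hj
    _ = a ^ (p - 1) * b * ∑ j ∈ t, x j ^ p := by rw [← mul_sum, mul_assoc]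

/-- Hölder's inequality with exponents `p` and `p / (p - 1)`, written so that it also covers
`p = 1`, where the second factor is a supremum. -/
lemma sum_abs_mul_rpow_le {ι : Type*} (s : Finset ι) {d b : ι → ℝ} (hb : ∀ i ∈ s, 0 ≤ b i)
    {p N : ℝ} (hp : 1 ≤ p) (hN : 0 ≤ N) (hd : ∑ i ∈ s, |d i| ^ p ≤ N ^ p) :
    ∑ i ∈ s, |d i| * b i ^ ((p - 1) / p) ≤ N * (∑ i ∈ s, b i) ^ ((p - 1) / p) := by
  have hp0 : 0 < p := zero_lt_one.trans_le hp
  have hdN : (∑ i ∈ s, |d i| ^ p) ^ (1 / p) ≤ N :=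
    (rpow_one_div_le_iff (sum_nonneg fun i _ => by positivity) hN hp0).2 hd
  rcases hp.eq_or_lt with rfl | hp1
  · simpa using hdN
  have hq := Real.HolderConjugate.conjExponent hp1
  have hpow : ∀ i ∈ s, (b i ^ ((p - 1) / p)) ^ p.conjExponent = b i := fun i hi => by
    rw [← Real.rpow_mul (hb i hi), Real.conjExponent, div_mul_div_cancel₀ hp0.ne',
      div_self (by linarith), Real.rpow_one]
  calc ∑ i ∈ s, |d i| * b i ^ ((p - 1) / p)
      ≤ (∑ i ∈ s, |d i| ^ p) ^ (1 / p) *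
          (∑ i ∈ s, (b i ^ ((p - 1) / p)) ^ p.conjExponent) ^ (1 / p.conjExponent) :=
        Real.inner_le_Lp_mul_Lq_of_nonneg s hq (fun i _ => abs_nonneg _)
          fun i hi => Real.rpow_nonneg (hb i hi) _
    _ ≤ N * (∑ i ∈ s, b i) ^ ((p - 1) / p) := by
        rw [sum_congr rfl hpow, Real.conjExponent, one_div_div]
        gcongr
        exact Real.rpow_nonneg (sum_nonneg hb) _

lemma abs_le_rpow_mul_sq_rpow {x t p : ℝ} (hxt : |x| ≤ t) (hp1 : 1 ≤ p) (hp2 : p ≤ 2) :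
    |x| ≤ t ^ ((2 - p) / p) * (x ^ 2) ^ ((p - 1) / p) := by
  rw [← sq_abs, ← Real.rpow_natCast, ← Real.rpow_mul (abs_nonneg x)]
  rcases (abs_nonneg x).eq_or_lt with h0 | h0
  · rw [← h0]
    exact mul_nonneg (Real.rpow_nonneg (h0 ▸ hxt) _) (Real.rpow_nonneg le_rfl _)
  calc |x| = |x| ^ ((2 - p) / p) * |x| ^ ((2 : ℕ) * ((p - 1) / p)) := by
        rw [← Real.rpow_add h0, show (2 - p) / p + (2 : ℕ) * ((p - 1) / p) = 1 by
          field_simp; push_cast; ring, Real.rpow_one]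
    _ ≤ t ^ ((2 - p) / p) * |x| ^ ((2 : ℕ) * ((p - 1) / p)) := by
        gcongr

lemma rpow_one_sub_le_inv_one_add_mul {x r : ℝ} (hx0 : 0 ≤ x) (hx1 : x ≤ 1) (hr : 0 ≤ r) :
    (1 - x) ^ r ≤ (1 + r * x)⁻¹ :=
  calc (1 - x) ^ r ≤ Real.exp (-x) ^ r :=
        Real.rpow_le_rpow (by linarith) (by linarith [Real.add_one_le_exp (-x)]) hr
    _ = (Real.exp (r * x))⁻¹ := by rw [← Real.exp_mul, ← Real.exp_neg]; ring_nf
    _ ≤ (1 + r * x)⁻¹ :=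
        inv_anti₀ (by positivity) (by linarith [Real.add_one_le_exp (r * x)])

/-- A discrete analogue of `y' = -y ^ (1 + r) / L`, whose solutions satisfy `r t y(t) ^ r ≤ L`. -/
lemma mul_rpow_le_of_le_sub_rpow_div {a : ℕ → ℝ} (ha : ∀ k, 0 ≤ a k) {L r : ℝ} (hL : 0 < L)
    (hr : 0 < r) (hstep : ∀ k, a (k + 1) ≤ a k - a k ^ (1 + r) / L) (m : ℕ) :
    r * m * a m ^ r ≤ L := by
  induction m with
  | zero => simpa using hL.le
  | succ k ih =>
    set y := a k ^ r
    have hy : 0 ≤ y := Real.rpow_nonneg (ha k) r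
    rcases (ha k).eq_or_lt with hk | hk
    · have hzero : a (k + 1) = 0 := le_antisymm
        (by simpa [← hk, Real.zero_rpow (by positivity : 1 + r ≠ 0)] using hstep k) (ha _)
      simp [hzero, Real.zero_rpow hr.ne', hL.le]
    have hnext : a (k + 1) ≤ a k * (1 - y / L) := by
      have := hstep k
      rw [Real.rpow_add hk, Real.rpow_one] at this
      linarith [mul_div_assoc (a k) y L]
    have hyL : y / L ≤ 1 := by
      by_contra! h
      nlinarith [ha (k + 1), mul_neg_of_pos_of_neg hk (sub_neg.2 h)]
    have hdecay : a (k + 1) ^ r ≤ y * (1 + r * (y / L))⁻¹ :=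
      calc a (k + 1) ^ r ≤ (a k * (1 - y / L)) ^ r := Real.rpow_le_rpow (ha _) hnext hr.le
        _ = y * (1 - y / L) ^ r := Real.mul_rpow hk.le (by linarith)
        _ ≤ y * (1 + r * (y / L))⁻¹ := by
            gcongr
            exact rpow_one_sub_le_inv_one_add_mul (div_nonneg hy hL.le) hyL hr.le
    have hpos : 0 < 1 + r * (y / L) := by positivity
    calc r * ↑(k + 1) * a (k + 1) ^ r ≤ r * (k + 1) * (y * (1 + r * (y / L))⁻¹) := by
          push_cast; gcongr
      _ ≤ L := by
          rw [← div_eq_mul_inv, mul_div_assoc', div_le_iff₀ hpos]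
          field_simp
          nlinarith

lemma rpow_le_of_le_mul_rpow_mul_rpow {a t K p : ℝ} (ha : 0 ≤ a) (ht : 0 ≤ t) (hK : 0 ≤ K)
    (hp1 : 1 ≤ p) (hp2 : p < 2) (h : a ≤ K * t ^ ((2 - p) / p) * a ^ ((p - 1) / p)) :
    a ^ (1 + p / (2 - p)) ≤ K ^ (2 * (p / (2 - p))) * t ^ 2 := by
  have h2p : 0 < 2 - p := by linarith
  rcases ha.eq_or_lt with rfl | ha
  · rw [Real.zero_rpow (by positivity)]
    positivity
  have hroot : a ^ (1 / p) ≤ K * t ^ ((2 - p) / p) := by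
    rw [← mul_le_mul_iff_of_pos_right (Real.rpow_pos_of_pos ha ((p - 1) / p)),
      ← Real.rpow_add ha, show 1 / p + (p - 1) / p = 1 by field_simp; ring, Real.rpow_one]
    exact h
  calc a ^ (1 + p / (2 - p)) = (a ^ (1 / p)) ^ (2 * (p / (2 - p))) := by
        rw [← Real.rpow_mul ha.le]
        congr 1
        field_simp
        ring
    _ ≤ (K * t ^ ((2 - p) / p)) ^ (2 * (p / (2 - p))) := by gcongr
    _ = K ^ (2 * (p / (2 - p))) * t ^ 2 := by
        rw [Real.mul_rpow hK (Real.rpow_nonneg ht _), ← Real.rpow_mul ht,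
          show (2 - p) / p * (2 * (p / (2 - p))) = (2 : ℕ) by field_simp; norm_num,
          Real.rpow_natCast]

lemma le_mul_rpow_of_mul_sq_rpow_le {s K r x : ℝ} (hs : 0 ≤ s) (hK : 0 ≤ K) (hr : 1 ≤ r)
    (hx : 1 ≤ x) (h : r * x * (s ^ 2) ^ r ≤ K ^ (2 * r)) : s ≤ K * x ^ (-1 / (2 * r)) := by
  have hr0 : 0 < 2 * r := by linarith
  have hx0 : 0 < x := by linarith
  rw [← Real.rpow_le_rpow_iff hs (by positivity) hr0, Real.mul_rpow hK (by positivity),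
    ← Real.rpow_mul hx0.le, div_mul_cancel₀ _ hr0.ne', Real.rpow_neg_one, ← div_eq_mul_inv,
    le_div_iff₀ hx0]
  have hs2 : (s ^ 2) ^ r = s ^ (2 * r) := by
    rw [← Real.rpow_natCast, ← Real.rpow_mul hs]; norm_num
  rw [hs2] at h
  nlinarith [mul_nonneg (mul_nonneg (sub_nonneg.2 hr) hx0.le) (Real.rpow_nonneg hs (2 * r))]

end RealInequalities

section ApClass

variable {H : Type*} [NormedAddCommGroup H] [InnerProductSpace ℝ H] {D : Set H} {p M N : ℝ}

lemma add_mem_repSet (hp : 1 ≤ p) (hM : 0 ≤ M) (hN : 0 ≤ N) {x y : H}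
    (hx : x ∈ repSet D p M) (hy : y ∈ repSet D p N) : x + y ∈ repSet D p (M + N) := by
  have hp0 : 0 < p := zero_lt_one.trans_le hp
  obtain ⟨S, c, hS, hc, rfl⟩ := hx
  obtain ⟨T, d, hT, hd, rfl⟩ := hy
  set c' : H → ℝ := fun g => if g ∈ S then c g else 0
  set d' : H → ℝ := fun g => if g ∈ T then d g else 0
  have hc' : ∑ g ∈ S ∪ T, |c' g| ^ p = ∑ g ∈ S, |c g| ^ p := by
    simp [c', apply_ite (fun y : ℝ => |y| ^ p), Real.zero_rpow hp0.ne']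
  have hd' : ∑ g ∈ S ∪ T, |d' g| ^ p = ∑ g ∈ T, |d g| ^ p := by
    simp [d', apply_ite (fun y : ℝ => |y| ^ p), Real.zero_rpow hp0.ne']
  have hsum : ∀ {e : H → ℝ} {s : Finset H}, 0 ≤ ∑ g ∈ s, |e g| ^ p :=
    sum_nonneg fun _ _ => by positivity
  refine ⟨S ∪ T, fun g => c' g + d' g, by simpa using Set.union_subset hS hT, ?_, ?_⟩
  · rw [← rpow_one_div_le_iff hsum (by linarith) hp0]
    refine (Real.Lp_add_le _ c' d' hp).trans (add_le_add ?_ ?_)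
    · rwa [hc', rpow_one_div_le_iff hsum hM hp0]
    · rwa [hd', rpow_one_div_le_iff hsum hN hp0]
  · simp [c', d', add_smul, sum_add_distrib, ite_smul]

lemma neg_mem_repSet {x : H} (hx : x ∈ repSet D p M) : -x ∈ repSet D p M := by
  obtain ⟨S, c, hS, hc, rfl⟩ := hx
  exact ⟨S, -c, hS, by simpa using hc, by simp [neg_smul]⟩

lemma sub_mem_Aclass (hp : 1 ≤ p) (hM : 0 ≤ M) (hN : 0 ≤ N) {f u : H}
    (hf : f ∈ Aclass D p M) (hu : u ∈ repSet D p N) : f - u ∈ Aclass D p (M + N) :=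
  map_mem_closure (f := (· - u)) (continuous_sub_right u) hf fun x hx => by
    simpa [sub_eq_add_neg] using add_mem_repSet hp hM hN hx (neg_mem_repSet hu)

lemma le_mul_Anorm {D : Set H} {p c x : ℝ} {f : H} (hf : ∃ M, 0 ≤ M ∧ f ∈ Aclass D p M)
    (hc : 0 < c) (h : ∀ M, 0 ≤ M → f ∈ Aclass D p M → x ≤ c * M) : x ≤ c * Anorm D p f := by
  rw [mul_comm, ← div_le_iff₀ hc]
  refine le_csInf hf fun M ⟨hM, hfM⟩ => ?_
  rw [div_le_iff₀ hc, mul_comm]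
  exact h M hM hfM

end ApClass

section Coherence

variable {H : Type*} [NormedAddCommGroup H] [InnerProductSpace ℝ H]

/-- `μ₁(D) ≤ μ`. -/
def CumulativeCoherenceLE (D : Set H) (μ : ℝ) : Prop :=
  ∀ g ∈ D, ∀ S : Finset H, ↑S ⊆ D → g ∉ S → ∑ h ∈ S, |⟪h, g⟫| ≤ μ

namespace CumulativeCoherenceLE

variable {D : Set H} {μ : ℝ}

lemma sum_erase_le (hD : CumulativeCoherenceLE D μ) {g : H} (hg : g ∈ D) {S : Finset H}
    (hS : ↑S ⊆ D) : ∑ h ∈ S.erase g, |⟪h, g⟫| ≤ μ :=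
  hD g hg _ ((coe_subset.2 (erase_subset g S)).trans hS) (notMem_erase g S)

lemma sum_le (hD : CumulativeCoherenceLE D μ) (hDnorm : ∀ g ∈ D, ‖g‖ = 1)
    {g : H} (hg : g ∈ D) {S : Finset H} (hS : ↑S ⊆ D) : ∑ h ∈ S, |⟪h, g⟫| ≤ 1 + μ := by
  by_cases hgS : g ∈ S
  · rw [← add_sum_erase S _ hgS, real_inner_self_eq_norm_sq, hDnorm g hg]
    simpa using hD.sum_erase_le hg hS
  · linarith [hD g hg S hS hgS]

lemma norm_sum_smul_sq_le (hD : CumulativeCoherenceLE D μ) (hDnorm : ∀ g ∈ D, ‖g‖ = 1)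
    {S : Finset H} (hS : ↑S ⊆ D) (c : H → ℝ) :
    ‖∑ g ∈ S, c g • g‖ ^ 2 ≤ (1 + μ) * ∑ g ∈ S, c g ^ 2 := by
  have hterm : ∀ g h : H, c g * c h * ⟪h, g⟫ ≤
      c g ^ 2 / 2 * |⟪h, g⟫| + c h ^ 2 / 2 * |⟪g, h⟫| := fun g h => by
    rw [real_inner_comm h g, ← add_mul]
    calc c g * c h * ⟪h, g⟫ ≤ |c g * c h| * |⟪h, g⟫| := by
          rw [← abs_mul]; exact le_abs_self _
      _ ≤ (c g ^ 2 / 2 + c h ^ 2 / 2) * |⟪h, g⟫| := by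
          gcongr
          nlinarith [sq_nonneg (|c g| - |c h|), sq_abs (c g), sq_abs (c h), abs_mul (c g) (c h)]
  calc ‖∑ g ∈ S, c g • g‖ ^ 2 = ∑ g ∈ S, ∑ h ∈ S, c g * c h * ⟪h, g⟫ := by
        simp only [← real_inner_self_eq_norm_sq, sum_inner, inner_sum, real_inner_smul_left,
          real_inner_smul_right]
        exact sum_congr rfl fun g _ => sum_congr rfl fun h _ => by ring
    _ ≤ ∑ g ∈ S, ∑ h ∈ S, (c g ^ 2 / 2 * |⟪h, g⟫| + c h ^ 2 / 2 * |⟪g, h⟫|) :=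
        sum_le_sum fun g _ => sum_le_sum fun h _ => hterm g h
    _ = ∑ g ∈ S, c g ^ 2 * ∑ h ∈ S, |⟪h, g⟫| := by
        rw [sum_congr rfl fun g _ => sum_add_distrib, sum_add_distrib,
          sum_comm (f := fun g h => c h ^ 2 / 2 * |⟪g, h⟫|), ← sum_add_distrib]
        simp only [mul_sum, ← sum_add_distrib]
        exact sum_congr rfl fun g _ => sum_congr rfl fun h _ => by ring
    _ ≤ ∑ g ∈ S, c g ^ 2 * (1 + μ) :=
        sum_le_sum fun g hg => by gcongr; exact hD.sum_le hDnorm (hS hg) hS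
    _ = (1 + μ) * ∑ g ∈ S, c g ^ 2 := by rw [mul_sum]; simp only [mul_comm]

lemma sum_inner_sq_le (hD : CumulativeCoherenceLE D μ) (hDnorm : ∀ g ∈ D, ‖g‖ = 1)
    (hμ : 0 ≤ μ) (v : H) {S : Finset H} (hS : ↑S ⊆ D) :
    ∑ g ∈ S, ⟪v, g⟫ ^ 2 ≤ (1 + μ) * ‖v‖ ^ 2 := by
  set T := ∑ g ∈ S, ⟪v, g⟫ ^ 2
  set w := ∑ g ∈ S, ⟪v, g⟫ • g
  have hT : 0 ≤ T := sum_nonneg fun g _ => sq_nonneg _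
  have hvw : ⟪v, w⟫ = T := by
    simp only [w, T, inner_sum, real_inner_smul_right, sq]
  have hw : ‖w‖ ^ 2 ≤ (1 + μ) * T := hD.norm_sum_smul_sq_le hDnorm hS _
  have hcs : T ≤ ‖v‖ * ‖w‖ := hvw ▸ real_inner_le_norm v w
  rcases hT.eq_or_lt with hT0 | hT0
  · rw [← hT0]; exact mul_nonneg (by linarith) (sq_nonneg _)
  refine le_of_mul_le_mul_right ?_ hT0
  calc T * T ≤ ‖v‖ ^ 2 * ‖w‖ ^ 2 := by nlinarith
    _ ≤ ‖v‖ ^ 2 * ((1 + μ) * T) := by gcongr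
    _ = (1 + μ) * ‖v‖ ^ 2 * T := by ring

lemma sum_abs_inner_rpow_le (hD : CumulativeCoherenceLE D μ) (hDnorm : ∀ g ∈ D, ‖g‖ = 1)
    (hμ : 0 ≤ μ) {p M : ℝ} (hp : 1 ≤ p) (hM : 0 ≤ M) {f : H} (hf : f ∈ Aclass D p M)
    {Γ : Finset H} (hΓ : ↑Γ ⊆ D) : ∑ g ∈ Γ, |⟪f, g⟫| ^ p ≤ ((1 + μ) * M) ^ p := by
  have hp0 : 0 < p := by linarith
  refine closure_minimal (s := repSet D p M) ?_ (isClosed_le (continuous_finsetSum _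
    fun g _ => (continuous_id.inner continuous_const).abs.rpow_const fun _ => Or.inr hp0.le)
    continuous_const) hf
  rintro _ ⟨S, c, hS, hc, rfl⟩
  calc ∑ g ∈ Γ, |⟪∑ l ∈ S, c l • l, g⟫| ^ p ≤ ∑ g ∈ Γ, (∑ l ∈ S, |⟪l, g⟫| * |c l|) ^ p := by
        gcongr with g
        rw [sum_inner]
        refine (abs_sum_le_sum_abs _ _).trans (le_of_eq (sum_congr rfl fun l _ => ?_))
        rw [real_inner_smul_left, abs_mul, mul_comm]
    _ ≤ (1 + μ) ^ (p - 1) * (1 + μ) * ∑ l ∈ S, |c l| ^ p :=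
        sum_rpow_sum_mul_le Γ S (fun _ _ => abs_nonneg _) (fun _ => abs_nonneg _) hp
          (by linarith) (fun g hg => hD.sum_le hDnorm (hΓ hg) hS)
          fun l hl => by simpa only [real_inner_comm] using hD.sum_le hDnorm (hS hl) hΓ
    _ ≤ ((1 + μ) * M) ^ p := by
        rw [← Real.rpow_add_one (by linarith : 1 + μ ≠ 0), sub_add_cancel,
          Real.mul_rpow (by linarith) hM]
        gcongr

lemma norm_sq_le_of_abs_inner_le (hD : CumulativeCoherenceLE D μ)
    (hDnorm : ∀ g ∈ D, ‖g‖ = 1) (hμ : 0 ≤ μ) {p N t : ℝ} (hp1 : 1 ≤ p) (hp2 : p ≤ 2)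
    (hN : 0 ≤ N) {v : H} (hv : v ∈ Aclass D p N) (ht0 : 0 ≤ t)
    (ht : ∀ g ∈ D, |⟪v, g⟫| ≤ t) :
    ‖v‖ ^ 2 ≤ N * t ^ ((2 - p) / p) * ((1 + μ) * ‖v‖ ^ 2) ^ ((p - 1) / p) := by
  nth_rw 1 [← real_inner_self_eq_norm_sq v]
  refine closure_minimal (s := repSet D p N) ?_
    (isClosed_le (continuous_const.inner continuous_id : Continuous fun x : H => ⟪v, x⟫)
      continuous_const) hv
  rintro _ ⟨S, d, hS, hd, rfl⟩
  calc ⟪v, ∑ g ∈ S, d g • g⟫ ≤ ∑ g ∈ S, |d g| * |⟪v, g⟫| := by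
        rw [inner_sum]
        gcongr with g
        rw [real_inner_smul_right, ← abs_mul]
        exact le_abs_self _
    _ ≤ ∑ g ∈ S, |d g| * (t ^ ((2 - p) / p) * (⟪v, g⟫ ^ 2) ^ ((p - 1) / p)) := by
        gcongr with g hg
        exact abs_le_rpow_mul_sq_rpow (ht g (hS hg)) hp1 hp2
    _ = t ^ ((2 - p) / p) * ∑ g ∈ S, |d g| * (⟪v, g⟫ ^ 2) ^ ((p - 1) / p) := by
        rw [mul_sum]
        exact sum_congr rfl fun g _ => by ring
    _ ≤ t ^ ((2 - p) / p) * (N * (∑ g ∈ S, ⟪v, g⟫ ^ 2) ^ ((p - 1) / p)) := by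
        gcongr
        exact sum_abs_mul_rpow_le S (fun _ _ => sq_nonneg _) hp1 hN hd
    _ ≤ t ^ ((2 - p) / p) * (N * ((1 + μ) * ‖v‖ ^ 2) ^ ((p - 1) / p)) := by
        gcongr
        exact hD.sum_inner_sq_le hDnorm hμ v hS
    _ = N * t ^ ((2 - p) / p) * ((1 + μ) * ‖v‖ ^ 2) ^ ((p - 1) / p) := by ring

lemma sum_sum_erase_rpow_le (hD : CumulativeCoherenceLE D μ) (hμ : 0 ≤ μ) {p : ℝ}
    (hp : 1 ≤ p) {Γ : Finset H} (hΓ : ↑Γ ⊆ D) {σ : H → ℝ} (hσ : ∀ h, 0 ≤ σ h) :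
    ∑ g ∈ Γ, (∑ h ∈ Γ.erase g, |⟪h, g⟫| * σ h) ^ p ≤ μ ^ p * ∑ h ∈ Γ, σ h ^ p := by
  have hoff : ∀ (g : H) (F : H → ℝ), ∑ h ∈ Γ.erase g, F h = ∑ h ∈ Γ, if h ≠ g then F h else 0 :=
    fun g F => by rw [← filter_ne' Γ g, sum_filter]
  have hschur := sum_rpow_sum_mul_le Γ Γ (K := fun g h => if h ≠ g then |⟪h, g⟫| else 0)
    (fun g h => by positivity) hσ hp hμ
    (fun g hg => by simpa [hoff] using hD.sum_erase_le (hΓ hg) hΓ)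
    (fun h hh => by
      simpa [hoff, real_inner_comm h, eq_comm (a := h)] using hD.sum_erase_le (hΓ hh) hΓ)
  rw [← Real.rpow_add_one' hμ (by linarith), sub_add_cancel] at hschur
  simpa only [hoff, ite_mul, zero_mul] using hschur

end CumulativeCoherenceLE

end Coherence

noncomputable def atomWeight {α : Type*} (gs : ℕ → α) (c : ℕ → ℝ) (m : ℕ) (h : α) : ℝ :=
  ∑ k ∈ (range m).filter (fun k => gs (k + 1) = h), c k

section atomWeight

variable {α : Type*} {gs : ℕ → α} {c : ℕ → ℝ} {m : ℕ} {h : α}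

lemma atomWeight_succ :
    atomWeight gs c (m + 1) h = atomWeight gs c m h + if gs (m + 1) = h then c m else 0 := by
  simp only [atomWeight, sum_filter, sum_range_succ]

lemma atomWeight_nonneg (hc : ∀ k, 0 ≤ c k) : 0 ≤ atomWeight gs c m h :=
  sum_nonneg fun k _ => hc k

lemma abs_atomWeight_le : |atomWeight gs c m h| ≤ atomWeight gs (fun k => |c k|) m h :=
  abs_sum_le_sum_abs _ _

lemma sum_range_smul_eq_sum_atomWeight_smul [AddCommGroup α] [Module ℝ α] :
    ∑ k ∈ range m, c k • gs (k + 1) =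
      ∑ h ∈ (range m).image (fun k => gs (k + 1)), atomWeight gs c m h • h := by
  rw [← sum_fiberwise_of_maps_to fun k hk => mem_image_of_mem (fun k => gs (k + 1)) hk]
  refine sum_congr rfl fun h _ => ?_
  rw [atomWeight, sum_smul]
  exact sum_congr rfl fun k hk => by rw [(mem_filter.1 hk).2]

end atomWeight

section Pursuit

variable {H : Type*} [NormedAddCommGroup H] [InnerProductSpace ℝ H]

/-- The atoms may be chosen arbitrarily; the greedy choice is imposed separately. -/
structure IsPursuit (D : Set H) (fs gs : ℕ → H) : Prop where
  mem : ∀ m, gs (m + 1) ∈ D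
  step : ∀ m, fs (m + 1) = fs m - ⟪fs m, gs (m + 1)⟫ • gs (m + 1)

namespace IsPursuit

variable {D : Set H} {fs gs : ℕ → H} {μ p M : ℝ}

lemma norm_sq_succ (hpur : IsPursuit D fs gs) (hDnorm : ∀ g ∈ D, ‖g‖ = 1) (m : ℕ) :
    ‖fs (m + 1)‖ ^ 2 = ‖fs m‖ ^ 2 - ⟪fs m, gs (m + 1)⟫ ^ 2 := by
  rw [hpur.step m, norm_sub_sq_real, real_inner_smul_right, norm_smul, hDnorm _ (hpur.mem m),
    Real.norm_eq_abs]
  ring_nf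
  rw [sq_abs]
  ring

lemma eq_sub_sum (hpur : IsPursuit D fs gs) (m : ℕ) :
    fs m = fs 0 - ∑ k ∈ range m, ⟪fs k, gs (k + 1)⟫ • gs (k + 1) := by
  induction m with
  | zero => simp
  | succ m ih => rw [hpur.step m, sum_range_succ, ih]; abel

/-- When `g` itself is selected, its correlation moves into its weight and the residual becomes
orthogonal to `g`; otherwise the correlation with `g` changes by at most the leakage
`|⟪fs m, gs (m + 1)⟫| * |⟪gs (m + 1), g⟫|`. -/
lemma atomWeight_add_abs_inner_le (hpur : IsPursuit D fs gs) (hDnorm : ∀ g ∈ D, ‖g‖ = 1)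
    {m : ℕ} {Γ : Finset H} (hΓ : ∀ k < m, gs (k + 1) ∈ Γ) {g : H} (hg : g ∈ D) :
    atomWeight gs (fun k => |⟪fs k, gs (k + 1)⟫|) m g + |⟪fs m, g⟫| ≤
      |⟪fs 0, g⟫| +
        ∑ h ∈ Γ.erase g, |⟪h, g⟫| * atomWeight gs (fun k => |⟪fs k, gs (k + 1)⟫|) m h := by
  induction m with
  | zero => simp [atomWeight]
  | succ m ih =>
    have ih := ih fun k hk => hΓ k (by omega)
    have hrec : ⟪fs (m + 1), g⟫ = ⟪fs m, g⟫ - ⟪fs m, gs (m + 1)⟫ * ⟪gs (m + 1), g⟫ := by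
      rw [hpur.step m, inner_sub_left, real_inner_smul_left]
    simp only [atomWeight_succ, mul_add, sum_add_distrib, mul_ite, mul_zero, sum_ite_eq,
      mem_erase]
    by_cases hm : gs (m + 1) = g
    · have hgg : ⟪g, g⟫ = 1 := by rw [real_inner_self_eq_norm_sq, hDnorm g hg, one_pow]
      rw [hm, hgg, mul_one, sub_self] at hrec
      simp only [hm, if_true, ne_eq, not_true_eq_false, false_and, if_false, hrec, abs_zero]
      linarith
    · have hleak : |⟪fs (m + 1), g⟫| ≤ |⟪fs m, g⟫| + |⟪gs (m + 1), g⟫| * |⟪fs m, gs (m + 1)⟫| := by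
        rw [hrec, mul_comm, ← abs_mul]
        exact abs_sub _ _
      simp only [hm, if_false, ne_eq, not_false_eq_true, hΓ m (by omega), and_self, if_true]
      linarith

lemma coe_image_subset (hpur : IsPursuit D fs gs) (m : ℕ) :
    ↑((range m).image fun k => gs (k + 1)) ⊆ D := by
  intro g hg
  obtain ⟨k, -, rfl⟩ := mem_image.1 hg
  exact hpur.mem k

lemma sum_atomWeight_rpow_le (hpur : IsPursuit D fs gs) (hD : CumulativeCoherenceLE D μ)
    (hDnorm : ∀ g ∈ D, ‖g‖ = 1) (hμ : 0 ≤ μ) (hμ1 : μ < 1) (hp : 1 ≤ p) (hM : 0 ≤ M)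
    (hf : fs 0 ∈ Aclass D p M) (m : ℕ) :
    ∑ h ∈ (range m).image (fun k => gs (k + 1)),
      atomWeight gs (fun k => |⟪fs k, gs (k + 1)⟫|) m h ^ p ≤ ((1 + μ) / (1 - μ) * M) ^ p := by
  have hp0 : 0 < p := by linarith
  set Γ := (range m).image fun k => gs (k + 1)
  set σ := atomWeight gs (fun k => |⟪fs k, gs (k + 1)⟫|) m
  have hΓD : ↑Γ ⊆ D := hpur.coe_image_subset m
  have hσ : ∀ h, 0 ≤ σ h := fun h => atomWeight_nonneg fun k => abs_nonneg _
  set S := (∑ h ∈ Γ, σ h ^ p) ^ (1 / p)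
  have hcomp : ∀ g ∈ Γ, σ g ≤ |⟪fs 0, g⟫| + ∑ h ∈ Γ.erase g, |⟪h, g⟫| * σ h := fun g hg => by
    linarith [abs_nonneg ⟪fs m, g⟫, hpur.atomWeight_add_abs_inner_le hDnorm (m := m) (Γ := Γ)
      (fun k hk => mem_image_of_mem (fun k => gs (k + 1)) (mem_range.2 hk)) (hΓD hg)]
  have hinit : (∑ g ∈ Γ, |⟪fs 0, g⟫| ^ p) ^ (1 / p) ≤ (1 + μ) * M :=
    (rpow_one_div_le_iff (sum_nonneg fun _ _ => by positivity) (by positivity) hp0).2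
      (hD.sum_abs_inner_rpow_le hDnorm hμ hp hM hf hΓD)
  have hleak : (∑ g ∈ Γ, (∑ h ∈ Γ.erase g, |⟪h, g⟫| * σ h) ^ p) ^ (1 / p) ≤ μ * S :=
    calc _ ≤ (μ ^ p * ∑ h ∈ Γ, σ h ^ p) ^ (1 / p) :=
          Real.rpow_le_rpow (sum_nonneg fun g _ => Real.rpow_nonneg
            (sum_nonneg fun h _ => mul_nonneg (abs_nonneg _) (hσ h)) _)
            (hD.sum_sum_erase_rpow_le hμ hp hΓD hσ) (by positivity)
      _ = μ * S := by
          rw [Real.mul_rpow (by positivity) (sum_nonneg fun h _ => Real.rpow_nonneg (hσ h) _),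
            ← Real.rpow_mul hμ, mul_one_div_cancel hp0.ne', Real.rpow_one]
  have hS : S ≤ (1 + μ) * M + μ * S :=
    calc S ≤ (∑ g ∈ Γ, (|⟪fs 0, g⟫| + ∑ h ∈ Γ.erase g, |⟪h, g⟫| * σ h) ^ p) ^ (1 / p) :=
          Real.rpow_le_rpow (sum_nonneg fun h _ => Real.rpow_nonneg (hσ h) _)
            (sum_le_sum fun g hg => Real.rpow_le_rpow (hσ g) (hcomp g hg) hp0.le) (by positivity)
      _ ≤ _ := Real.Lp_add_le_of_nonneg Γ hp (fun _ _ => abs_nonneg _)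
          fun g _ => sum_nonneg fun h _ => mul_nonneg (abs_nonneg _) (hσ h)
      _ ≤ (1 + μ) * M + μ * S := add_le_add hinit hleak
  rw [← rpow_one_div_le_iff (sum_nonneg fun h _ => Real.rpow_nonneg (hσ h) _)
    (mul_nonneg (div_nonneg (by linarith) (by linarith)) hM) hp0, div_mul_eq_mul_div,
    le_div_iff₀ (by linarith)]
  linarith

lemma mem_Aclass (hpur : IsPursuit D fs gs) (hD : CumulativeCoherenceLE D μ)
    (hDnorm : ∀ g ∈ D, ‖g‖ = 1) (hμ : 0 ≤ μ) (hμ1 : μ < 1) (hp : 1 ≤ p) (hM : 0 ≤ M)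
    (hf : fs 0 ∈ Aclass D p M) (m : ℕ) : fs m ∈ Aclass D p (M + (1 + μ) / (1 - μ) * M) := by
  rw [hpur.eq_sub_sum m, sum_range_smul_eq_sum_atomWeight_smul]
  refine sub_mem_Aclass hp hM (mul_nonneg (div_nonneg (by linarith) (by linarith)) hM) hf
    ⟨_, _, hpur.coe_image_subset m, ?_, rfl⟩
  refine (sum_le_sum fun h _ => ?_).trans
    (hpur.sum_atomWeight_rpow_le hD hDnorm hμ hμ1 hp hM hf m)
  exact Real.rpow_le_rpow (abs_nonneg _) abs_atomWeight_le (by linarith)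

lemma norm_sq_rpow_le_of_greedy (hpur : IsPursuit D fs gs)
    (hmax : ∀ m, ∀ g ∈ D, |⟪fs m, g⟫| ≤ |⟪fs m, gs (m + 1)⟫|) (hD : CumulativeCoherenceLE D μ)
    (hDnorm : ∀ g ∈ D, ‖g‖ = 1) (hμ : 0 ≤ μ) (hμ1 : μ < 1) (hp1 : 1 ≤ p) (hp2 : p < 2)
    (hM : 0 ≤ M) (hf : fs 0 ∈ Aclass D p M) (m : ℕ) :
    (‖fs m‖ ^ 2) ^ (1 + p / (2 - p)) ≤
      (2 * (1 + μ) / (1 - μ) * M) ^ (2 * (p / (2 - p))) * ⟪fs m, gs (m + 1)⟫ ^ 2 := by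
  have hp0 : 0 < p := by linarith
  have hN : 0 ≤ M + (1 + μ) / (1 - μ) * M :=
    add_nonneg hM (mul_nonneg (div_nonneg (by linarith) (by linarith)) hM)
  have hB : (1 + μ) ^ ((p - 1) / p) ≤ 1 + μ := by
    refine (Real.rpow_le_rpow_of_exponent_le (by linarith) ?_).trans_eq (Real.rpow_one _)
    rw [div_le_one hp0]
    linarith
  have hdual := hD.norm_sq_le_of_abs_inner_le hDnorm hμ hp1 hp2.le hN
    (hpur.mem_Aclass hD hDnorm hμ hμ1 hp1 hM hf m) (abs_nonneg _) (hmax m)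
  rw [Real.mul_rpow (by linarith) (sq_nonneg _)] at hdual
  rw [← sq_abs ⟪fs m, gs (m + 1)⟫]
  refine rpow_le_of_le_mul_rpow_mul_rpow (sq_nonneg _) (abs_nonneg _)
    (mul_nonneg (div_nonneg (by linarith) (by linarith)) hM) hp1 hp2 (hdual.trans ?_)
  calc (M + (1 + μ) / (1 - μ) * M) * _ * ((1 + μ) ^ ((p - 1) / p) * _)
      ≤ (M + (1 + μ) / (1 - μ) * M) * |⟪fs m, gs (m + 1)⟫| ^ ((2 - p) / p) *
          ((1 + μ) * (‖fs m‖ ^ 2) ^ ((p - 1) / p)) := by gcongr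
    _ = _ := by
        field_simp [show 1 - μ ≠ 0 by linarith]
        ring

lemma norm_le_of_greedy (hpur : IsPursuit D fs gs)
    (hmax : ∀ m, ∀ g ∈ D, |⟪fs m, g⟫| ≤ |⟪fs m, gs (m + 1)⟫|) (hD : CumulativeCoherenceLE D μ)
    (hDnorm : ∀ g ∈ D, ‖g‖ = 1) (hμ : 0 ≤ μ) (hμ1 : μ < 1) (hp1 : 1 ≤ p) (hp2 : p < 2)
    (hM : 0 ≤ M) (hf : fs 0 ∈ Aclass D p M) {m : ℕ} (hm : 1 ≤ m) :
    ‖fs m‖ ≤ 2 * (1 + μ) / (1 - μ) * M * (m : ℝ) ^ (-1 / p + 1 / 2 : ℝ) := by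
  have hstep := hpur.norm_sq_rpow_le_of_greedy hmax hD hDnorm hμ hμ1 hp1 hp2 hM hf
  set K := 2 * (1 + μ) / (1 - μ) * M
  set r := p / (2 - p)
  have hr : 1 ≤ r := by rw [le_div_iff₀ (by linarith)]; linarith
  have hK : 0 ≤ K := mul_nonneg (div_nonneg (by linarith) (by linarith)) hM
  have hexp : (-1 / p + 1 / 2 : ℝ) = -1 / (2 * r) := by
    simp only [r]
    field_simp [show 2 - p ≠ 0 by linarith]
    ring
  rw [hexp]
  rcases hK.eq_or_lt with hK0 | hKpos
  · have h0 := hstep m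
    rw [← hK0, Real.zero_rpow (by linarith), zero_mul] at h0
    have hsq : ‖fs m‖ ^ 2 = 0 := (Real.rpow_eq_zero (sq_nonneg _) (by linarith)).1
      (le_antisymm h0 (by positivity))
    rw [← hK0, zero_mul, (pow_eq_zero_iff two_ne_zero).1 hsq]
  refine le_mul_rpow_of_mul_sq_rpow_le (norm_nonneg _) hK hr (by exact_mod_cast hm)
    (mul_rpow_le_of_le_sub_rpow_div (fun k => sq_nonneg ‖fs k‖) (by positivity) (by positivity)
      (fun k => ?_) m)
  rw [hpur.norm_sq_succ hDnorm k, le_sub_iff_add_le, add_comm, ← le_sub_iff_add_le, sub_sub_cancel,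
    div_le_iff₀ (by positivity), mul_comm]
  exact hstep k

end IsPursuit

end Pursuit

theorem pga_rate_Ap_general
    {H : Type*} [NormedAddCommGroup H] [InnerProductSpace ℝ H]
    (D : Set H) (hDnorm : ∀ g ∈ D, ‖g‖ = 1)
    (p : ℝ) (hp1 : 1 ≤ p) (hp2 : p < 2)
    (μ : ℝ) (hμlt : μ < 1 / 3)
    (hμ : ∀ g ∈ D, ∀ S : Finset H, ↑S ⊆ D → g ∉ S →
      ∑ h ∈ S, |⟪h, g⟫| ≤ μ) :
    ∃ C₁ > (0 : ℝ), ∃ C₂ > (0 : ℝ),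
      ∀ f : H, (∃ M : ℝ, 0 ≤ M ∧ f ∈ Aclass D p M) →
      ∀ fs gs : ℕ → H, fs 0 = f →
      (∀ m, gs (m + 1) ∈ D) →
      (∀ m, ∀ g ∈ D, |⟪fs m, g⟫| ≤ |⟪fs m, gs (m + 1)⟫|) →
      (∀ m, fs (m + 1) = fs m - ⟪fs m, gs (m + 1)⟫ • gs (m + 1)) →
      ∀ m : ℕ, 1 ≤ m →
        ‖fs m‖ ≤ C₁ * C₂ * Anorm D p f * (m : ℝ) ^ (-1 / p + 1 / 2 : ℝ) := by
  set ν := max μ 0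
  have hν0 : 0 ≤ ν := le_max_right μ 0
  have hν1 : ν < 1 := max_lt (by linarith) one_pos
  have hD : CumulativeCoherenceLE D ν := fun g hg S hS hgS =>
    (hμ g hg S hS hgS).trans (le_max_left μ 0)
  refine ⟨1, one_pos, 2 * (1 + ν) / (1 - ν), div_pos (by linarith) (by linarith), ?_⟩
  rintro f hf fs gs rfl hmem hmax hstep m hm
  have hpur : IsPursuit D fs gs := ⟨hmem, hstep⟩
  calc ‖fs m‖ ≤ 2 * (1 + ν) / (1 - ν) * (m : ℝ) ^ (-1 / p + 1 / 2 : ℝ) * Anorm D p (fs 0) :=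
        le_mul_Anorm hf (mul_pos (div_pos (by linarith) (by linarith)) (by positivity))
          fun M hM hfM => (hpur.norm_le_of_greedy hmax hD hDnorm hν0 hν1 hp1 hp2 hM hfM hm).trans_eq
            (by ring)
    _ = 1 * (2 * (1 + ν) / (1 - ν)) * Anorm D p (fs 0) * (m : ℝ) ^ (-1 / p + 1 / 2 : ℝ) := by ring

/-- Theorem 2: for a dictionary with `μ₁(D) < 1/3` and `1 ≤ p < 2`, there are
constants `C₁ = C₁(p) > 0`, `C₂ = C₂(μ₁(D)) > 0` such that for every
`f ∈ A^p(D)` the PGA residuals satisfy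
`‖f - G_m^{PGA}(f,D)‖ ≤ C₁ C₂ |f|_p m^{-1/p+1/2}` for all `m ≥ 1`. -/
theorem pga_rate_Ap
    {H : Type*} [NormedAddCommGroup H] [InnerProductSpace ℝ H] [CompleteSpace H]
    [TopologicalSpace.SeparableSpace H]
    (D : Set H) (hDnorm : ∀ g ∈ D, ‖g‖ = 1)
    (hDdense : Dense (↑(Submodule.span ℝ D) : Set H))
    (p : ℝ) (hp1 : 1 ≤ p) (hp2 : p < 2)
    (μ : ℝ) (hμlt : μ < 1 / 3)
    (hμ : ∀ g ∈ D, ∀ S : Finset H, ↑S ⊆ D → g ∉ S →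
      ∑ h ∈ S, |⟪h, g⟫| ≤ μ) :
    ∃ C₁ > (0 : ℝ), ∃ C₂ > (0 : ℝ),
      ∀ f : H, (∃ M : ℝ, 0 ≤ M ∧ f ∈ Aclass D p M) →
      ∀ fs gs : ℕ → H, fs 0 = f →
      (∀ m, gs (m + 1) ∈ D) →
      (∀ m, ∀ g ∈ D, |⟪fs m, g⟫| ≤ |⟪fs m, gs (m + 1)⟫|) →
      (∀ m, fs (m + 1) = fs m - ⟪fs m, gs (m + 1)⟫ • gs (m + 1)) →
      ∀ m : ℕ, 1 ≤ m →
        ‖fs m‖ ≤ C₁ * C₂ * Anorm D p f * (m : ℝ) ^ (-1 / p + 1 / 2 : ℝ) :=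
  pga_rate_Ap_general D hDnorm p hp1 hp2 μ hμlt hμ
end
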